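/- arXiv:2409.07601 — 8 statements merged into one kernel-verified Lean document; each statement's English description precedes it below -/
import Mathlib

section
/- For natural numbers e ≥ f ≥ 1, the sequence c_n = H(n·e) − H(n·f) is increasing in n; that is, H((n+1)e) − H((n+1)f) ≥ H(ne) − H(nf) for all n ≥ 0. -/
/-- Harmonic number H(m) = ∑_{ℓ=1}^m 1/ℓ. -/
noncomputable def H (m : ℕ) : ℝ := ∑ ℓ ∈ Finset.range m, (1 : ℝ) / (ℓ + 1)

/-!
Fix `n` and put `g m = H ((n + 1) * m) - H (n * m)`; then `c_{n+1} - c_n = g e - g f`, so it is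
enough that `g` is monotone. Passing from `m` to `m + 1` adds the `n + 1` reciprocals
`1 / (nm + m + i + 1)` and removes the `n` reciprocals `1 / (nm + i + 1)`. With `x = nm`, for `i < n`
the paired difference `1 / (x + i + 1) - 1 / (x + m + i + 1)` is at most
`x / (n + 1) * (1 / (x + i) - 1 / (x + i + 1))`, and these bounds telescope to exactly the unpaired
term `1 / (x + m + n + 1)`.
-/

open Finset

lemma H_add (a b : ℕ) : H (a + b) = H a + ∑ i ∈ range b, 1 / ((a : ℝ) + i + 1) := by
  simp only [H, sum_range_add, Nat.cast_add, add_assoc]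

lemma H_monotone : Monotone H :=
  monotone_nat_of_le_succ fun k => by
    rw [H, H, sum_range_succ]
    exact le_add_of_nonneg_right (by positivity)

lemma inv_sub_inv_le_telescoping {n : ℕ} {m : ℝ} (hm : 0 < m) {i : ℕ} (hi : i < n) :
    1 / (n * m + i + 1) - 1 / (n * m + m + i + 1)
      ≤ n * m / (n + 1) * (1 / (n * m + i) - 1 / (n * m + i + 1)) := by
  have hx : 0 < (n : ℝ) * m := mul_pos (by exact_mod_cast i.zero_le.trans_lt hi) hm
  have hi' : (i : ℝ) + 1 ≤ n := by exact_mod_cast hi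
  have lhs : 1 / (n * m + i + 1) - 1 / (n * m + m + i + 1)
      = m / ((n * m + i + 1) * (n * m + m + i + 1)) := by field_simp; ring
  have rhs : n * m / (n + 1) * (1 / (n * m + i) - 1 / (n * m + i + 1))
      = n * m / ((n + 1) * ((n * m + i) * (n * m + i + 1))) := by field_simp; ring
  have key : ((n : ℝ) + 1) * (n * m + i) ≤ n * (n * m + m + i + 1) := by linarith
  rw [lhs, rhs, div_le_div_iff₀ (by positivity) (by positivity)]
  nlinarith [mul_le_mul_of_nonneg_left key (by positivity : (0 : ℝ) ≤ m * (n * m + i + 1))]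

lemma sum_range_inv_le_sum_range_succ_inv (n : ℕ) {m : ℝ} (hm : 0 < m) (hn : 0 < n) :
    ∑ i ∈ range n, 1 / (n * m + i + 1) ≤ ∑ i ∈ range (n + 1), 1 / (n * m + m + i + 1) := by
  have hx : 0 < (n : ℝ) * m := mul_pos (by exact_mod_cast hn) hm
  have telescope : ∑ i ∈ range n, (1 / (n * m + i) - 1 / (n * m + i + 1))
      = 1 / (n * m) - 1 / (n * m + n) := by
    simpa [add_assoc] using sum_range_sub' (fun i : ℕ => 1 / ((n : ℝ) * m + i)) n
  have paired : ∑ i ∈ range n, (1 / (n * m + i + 1) - 1 / (n * m + m + i + 1))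
      ≤ 1 / (n * m + m + n + 1) :=
    calc _ ≤ ∑ i ∈ range n, n * m / (n + 1) * (1 / (n * m + i) - 1 / (n * m + i + 1)) :=
          sum_le_sum fun i hi => inv_sub_inv_le_telescoping hm (mem_range.mp hi)
      _ = n * m / (n + 1) * (1 / (n * m) - 1 / (n * m + n)) := by rw [← mul_sum, telescope]
      _ = 1 / (n * m + m + n + 1) := by field_simp; ring
  rw [sum_sub_distrib] at paired
  rw [sum_range_succ]
  linarith

lemma H_mul_succ_sub_H_mul_le (n m : ℕ) :
    H ((n + 1) * m) - H (n * m) ≤ H ((n + 1) * (m + 1)) - H (n * (m + 1)) := by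
  rcases Nat.eq_zero_or_pos n with rfl | hn
  · simpa using H_monotone m.le_succ
  rcases Nat.eq_zero_or_pos m with rfl | hm
  · simpa using H_monotone n.le_succ
  rw [show (n + 1) * (m + 1) = n * m + m + (n + 1) by ring, show n * (m + 1) = n * m + n by ring,
    add_one_mul, H_add (n * m + m) (n + 1), H_add (n * m) n]
  push_cast
  linarith [sum_range_inv_le_sum_range_succ_inv n (m := m) (by exact_mod_cast hm) hn]

lemma monotone_H_mul_succ_sub_H_mul (n : ℕ) : Monotone fun m => H ((n + 1) * m) - H (n * m) :=
  monotone_nat_of_le_succ (H_mul_succ_sub_H_mul_le n)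

theorem stmt1_general (e f : ℕ) (hef : f ≤ e) (n : ℕ) :
    H (n * e) - H (n * f) ≤ H ((n + 1) * e) - H ((n + 1) * f) := by
  have := monotone_H_mul_succ_sub_H_mul n hef
  dsimp only at this
  linarith

/-- For e ≥ f ≥ 1, the sequence c_n = H(n·e) − H(n·f) is increasing in n. -/
theorem stmt1 (e f : ℕ) (hf : 1 ≤ f) (hef : f ≤ e) (n : ℕ) :
    H (n * e) - H (n * f) ≤ H ((n + 1) * e) - H ((n + 1) * f) :=
  stmt1_general e f hef n
end

section
/- For m ≥ 1 a natural number and n ≥ 1, the quantity (1/m) · Σ_{ℓ=1}^{m} 1/(n + ℓ/m) is increasing in m; i.e., for m' ≥ m ≥ 1, (1/m) Σ_{ℓ=1}^{m} 1/(n + ℓ/m) ≤ (1/m') Σ_{ℓ=1}^{m'} 1/(n + ℓ/m'). -/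
private lemma conv_one_div (a b l u : ℝ) (ha : 0 < a) (hb : 0 < b) (hl : 0 ≤ l) (hu : 0 ≤ u)
    (h : l + u = 1) : 1 / (l * a + u * b) ≤ l * (1 / a) + u * (1 / b) := by
  have hd : 0 < l * a + u * b := by
    rcases lt_or_eq_of_le hl with h1 | h1
    · nlinarith [mul_nonneg hu hb.le]
    · have : u = 1 := by linarith
      simp [← h1, this, hb]
  have e : l * (1 / a) + u * (1 / b) = (l * b + u * a) / (a * b) := by
    field_simp
  rw [e, div_le_div_iff₀ hd (mul_pos ha hb)]
  have : u = 1 - l := by linarith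
  subst this
  nlinarith [mul_nonneg (mul_nonneg hl hu) (sq_nonneg (a - b))]

private lemma key_ineq (n M x : ℝ) (hn : 0 < n) (hM : 0 < M) (hx : 0 ≤ x) (hxM : x + 1 ≤ M) :
    M * (1 / (n + (x + 1) / M)) ≤
      (M - x - 1) * (1 / (n + (x + 1) / (M + 1))) + (x + 1) * (1 / (n + (x + 2) / (M + 1))) := by
  have hM1 : (0:ℝ) < M + 1 := by linarith
  have ha : 0 < n + (x + 1) / (M + 1) := by positivity
  have hb : 0 < n + (x + 2) / (M + 1) := by positivity
  have hl : 0 ≤ (M - x - 1) / M := by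
    apply div_nonneg _ hM.le; linarith
  have hu : 0 ≤ (x + 1) / M := by positivity
  have hs : (M - x - 1) / M + (x + 1) / M = 1 := by field_simp; ring
  have h := conv_one_div (n + (x + 1) / (M + 1)) (n + (x + 2) / (M + 1))
    ((M - x - 1) / M) ((x + 1) / M) ha hb hl hu hs
  have e : (M - x - 1) / M * (n + (x + 1) / (M + 1)) + (x + 1) / M * (n + (x + 2) / (M + 1))
      = n + (x + 1) / M := by field_simp; ring
  rw [e] at h
  have h2 := mul_le_mul_of_nonneg_left h hM.le
  calc M * (1 / (n + (x + 1) / M))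
      ≤ M * ((M - x - 1) / M * (1 / (n + (x + 1) / (M + 1)))
          + (x + 1) / M * (1 / (n + (x + 2) / (M + 1)))) := h2
    _ = (M - x - 1) * (1 / (n + (x + 1) / (M + 1)))
          + (x + 1) * (1 / (n + (x + 2) / (M + 1))) := by
        field_simp

private lemma step_lemma (n : ℝ) (hn : 0 < n) (m : ℕ) (hm : 1 ≤ m) :
    (1 / (m : ℝ)) * ∑ ℓ ∈ Finset.range m, 1 / (n + ((ℓ : ℝ) + 1) / m) ≤
      (1 / ((m : ℝ) + 1)) * ∑ ℓ ∈ Finset.range (m + 1),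
        1 / (n + ((ℓ : ℝ) + 1) / ((m : ℝ) + 1)) := by
  set M : ℝ := (m : ℝ) with hMdef
  have hM : (0:ℝ) < M := by
    rw [hMdef]; exact_mod_cast Nat.lt_of_lt_of_le Nat.zero_lt_one hm
  have hM1 : (0:ℝ) < M + 1 := by linarith
  set T : ℕ → ℝ := fun j => 1 / (n + ((j : ℝ) + 1) / (M + 1)) with hTdef
  have hTpos : ∀ j : ℕ, 0 < T j := by
    intro j; simp only [hTdef]; positivity
  set S : ℝ := ∑ ℓ ∈ Finset.range m, 1 / (n + ((ℓ : ℝ) + 1) / M) with hSdef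
  set T' : ℝ := ∑ j ∈ Finset.range (m + 1), T j with hT'def
  -- Step 1: per-term convexity, summed
  have hB : M * S ≤ ∑ ℓ ∈ Finset.range m,
      ((M - (ℓ : ℝ) - 1) * T ℓ + ((ℓ : ℝ) + 1) * T (ℓ + 1)) := by
    rw [hSdef, Finset.mul_sum]
    apply Finset.sum_le_sum
    intro ℓ hℓ
    have hℓm : (ℓ : ℝ) + 1 ≤ M := by
      rw [hMdef]
      exact_mod_cast Nat.succ_le_of_lt (Finset.mem_range.mp hℓ)
    have hk := key_ineq n M (ℓ : ℝ) hn hM (by positivity) hℓm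
    have eT : (M - (ℓ : ℝ) - 1) * T ℓ + ((ℓ : ℝ) + 1) * T (ℓ + 1)
        = (M - (ℓ:ℝ) - 1) * (1 / (n + ((ℓ:ℝ) + 1) / (M + 1)))
          + ((ℓ:ℝ) + 1) * (1 / (n + ((ℓ:ℝ) + 2) / (M + 1))) := by
      simp only [hTdef]
      push_cast
      ring_nf
    rw [eT]
    exact hk
  -- Step 2: reindex the sums
  have e1 : ∑ ℓ ∈ Finset.range m, (((ℓ : ℝ) + 1) * T (ℓ + 1))
      = ∑ j ∈ Finset.range (m + 1), ((j : ℝ) * T j) := by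
    rw [Finset.sum_range_succ' (fun j => (j : ℝ) * T j) m]
    push_cast
    simp
  have e2 : ∑ ℓ ∈ Finset.range m, ((M - (ℓ : ℝ) - 1) * T ℓ)
      = (∑ j ∈ Finset.range (m + 1), ((M - (j : ℝ) - 1) * T j)) + T m := by
    rw [Finset.sum_range_succ]
    simp only [hMdef]
    ring
  have e3 : (∑ j ∈ Finset.range (m + 1), ((M - (j : ℝ) - 1) * T j))
        + (∑ j ∈ Finset.range (m + 1), ((j : ℝ) * T j)) = (M - 1) * T' := by
    rw [← Finset.sum_add_distrib, hT'def, Finset.mul_sum]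
    apply Finset.sum_congr rfl
    intro j _
    ring
  have hC : M * S ≤ (M - 1) * T' + T m := by
    calc M * S ≤ ∑ ℓ ∈ Finset.range m,
        ((M - (ℓ : ℝ) - 1) * T ℓ + ((ℓ : ℝ) + 1) * T (ℓ + 1)) := hB
      _ = (∑ ℓ ∈ Finset.range m, ((M - (ℓ : ℝ) - 1) * T ℓ))
          + ∑ ℓ ∈ Finset.range m, (((ℓ : ℝ) + 1) * T (ℓ + 1)) := Finset.sum_add_distrib
      _ = (M - 1) * T' + T m := by rw [e1, e2]; linarith [e3]
  -- Step 3: T m is the smallest term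
  have hD : (M + 1) * T m ≤ T' := by
    have hle : ∀ j ∈ Finset.range (m + 1), T m ≤ T j := by
      intro j hj
      simp only [hTdef]
      apply one_div_le_one_div_of_le (by positivity)
      have hjm : (j : ℝ) ≤ (m : ℝ) := by
        exact_mod_cast Nat.lt_succ_iff.mp (Finset.mem_range.mp hj)
      gcongr
    have hcard := Finset.card_nsmul_le_sum (Finset.range (m + 1)) T (T m) hle
    rw [Finset.card_range, nsmul_eq_mul] at hcard
    rw [hMdef]
    push_cast at hcard ⊢
    linarith
  -- Final combination
  rw [one_div_mul_eq_div, one_div_mul_eq_div, div_le_div_iff₀ hM hM1]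
  have hTm : 0 < T m := hTpos m
  nlinarith [mul_le_mul_of_nonneg_right hC hM1.le, hD, hM, hTm]

/-- For fixed n > 0, the average (1/m)·∑_{ℓ=1}^m 1/(n + ℓ/m) is increasing in m. -/
theorem stmt2 (n : ℝ) (hn : 0 < n) (m m' : ℕ) (hm : 1 ≤ m) (hmm' : m ≤ m') :
    (1 / (m : ℝ)) * ∑ ℓ ∈ Finset.range m, 1 / (n + ((ℓ : ℝ) + 1) / m) ≤
      (1 / (m' : ℝ)) * ∑ ℓ ∈ Finset.range m', 1 / (n + ((ℓ : ℝ) + 1) / m') := by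
  induction m', hmm' using Nat.le_induction with
  | base => exact le_refl _
  | succ k hk ih =>
      refine ih.trans ?_
      have h := step_lemma n hn k (hm.trans hk)
      push_cast
      exact h
end

section
/- Let e ≥ 1 and f_1, …, f_q ≥ 0 be natural numbers with Σ_m f_m = e. Define a_n = (n·e)! / Π_m (n·f_m)!. Then a_n is log-convex: a_n² ≤ a_{n−1} · a_{n+1} for all n ≥ 1. -/
/-!
The ratio `r n = a (n + 1) / a n` equals `∏_{i < e} (n e + 1 + i) / ∏_m ∏_{j < f m} (n f m + 1 + j)`,
and log-convexity of `a` is monotonicity of `r`. Both products have `e` factors, indexed by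
`i < e` and by the slots `(m, j)` with `j < f m`. Sort the slots by slope `(j + 1) / f m`: at most
`x e` slots have slope `≤ x`, so the slot of rank `i` has `(i + 1) / e ≤ (j + 1) / f m`, which is
exactly what makes `(n e + 1 + i) / (n f m + 1 + j)` nondecreasing in `n`.
-/

open Finset
open scoped Nat

section Rank

variable {α β : Type*} [LinearOrder β] {s : Finset α} {v : α → β}

theorem card_filter_lt_lt_card {x : α} (hx : x ∈ s) : #{y ∈ s | v y < v x} < #s :=
  card_lt_card (filter_ssubset.2 ⟨x, hx, lt_irrefl _⟩)

theorem injOn_card_filter_lt (hv : Set.InjOn v s) :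
    Set.InjOn (fun x => #{y ∈ s | v y < v x}) s := by
  have hmono : ∀ x y, x ∈ s → v x < v y → #{z ∈ s | v z < v x} < #{z ∈ s | v z < v y} :=
    fun x y hx hxy => card_lt_card <| (ssubset_iff_of_subset
      (monotone_filter_right _ fun z _ hz => hz.trans hxy)).2 ⟨x, by simp [hx, hxy]⟩
  intro x hx y hy h
  by_contra hne
  rcases (hv.ne hx hy hne).lt_or_gt with hxy | hyx
  · exact (hmono x y hx hxy).ne h
  · exact (hmono y x hy hyx).ne' h

theorem prod_range_card_eq_prod_card_filter_lt {M : Type*} [CommMonoid M] (hv : Set.InjOn v s)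
    (g : ℕ → M) : ∏ i ∈ range #s, g i = ∏ x ∈ s, g #{y ∈ s | v y < v x} := by
  have hmaps : Set.MapsTo (fun x => #{y ∈ s | v y < v x}) s (range #s) :=
    fun x hx => mem_range.2 (card_filter_lt_lt_card hx)
  refine (prod_nbij _ hmaps (injOn_card_filter_lt hv) ?_ fun _ _ => rfl).symm
  exact surjOn_of_injOn_of_card_le _ hmaps (injOn_card_filter_lt hv) (card_range _).le

end Rank

theorem card_filter_succ_le (s : Finset ℕ) {y : ℚ} (hy : 0 ≤ y) :
    (#(s.filter fun j : ℕ => (j + 1 : ℚ) ≤ y) : ℚ) ≤ y := by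
  have hsub : s.filter (fun j : ℕ => (j + 1 : ℚ) ≤ y) ⊆ range ⌊y⌋₊ := fun j hj =>
    mem_range.2 (Nat.le_floor (by exact_mod_cast (mem_filter.1 hj).2))
  calc (#(s.filter fun j : ℕ => (j + 1 : ℚ) ≤ y) : ℚ) ≤ ⌊y⌋₊ := by
        exact_mod_cast (card_le_card hsub).trans (card_range _).le
    _ ≤ y := Nat.floor_le hy

theorem sq_le_mul_of_monotone_div {K : Type*} [Field K] [LinearOrder K] [IsStrictOrderedRing K]
    {a : ℕ → K} (hpos : ∀ n, 0 < a n) (hmono : Monotone fun n => a (n + 1) / a n) (n : ℕ) :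
    a (n + 1) ^ 2 ≤ a n * a (n + 2) := by
  have h := hmono n.le_succ
  rw [div_le_div_iff₀ (hpos n) (hpos (n + 1))] at h
  linarith

namespace Multinomial

variable {q : ℕ} (f : Fin q → ℕ)

def slots : Finset (Σ _ : Fin q, ℕ) := univ.sigma fun m => range (f m)

def slope (t : Σ _ : Fin q, ℕ) : ℚ := (t.2 + 1) / f t.1

theorem card_slots : #(slots f) = ∑ m, f m := by simp [slots]

theorem card_filter_slope_le {x : ℚ} (hx : 0 ≤ x) :
    (#{t ∈ slots f | slope f t ≤ x} : ℚ) ≤ x * ∑ m, f m := by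
  rw [slots, filter_sigma, card_sigma, Nat.cast_sum, Nat.cast_sum, mul_sum]
  refine sum_le_sum fun m _ => ?_
  rcases (f m).eq_zero_or_pos with hm | hm
  · simp [hm]
  have hiff : ∀ j : ℕ, slope f ⟨m, j⟩ ≤ x ↔ ((j : ℚ) + 1) ≤ x * f m := fun j =>
    div_le_iff₀ (by exact_mod_cast hm)
  simp only [hiff]
  exact card_filter_succ_le _ (by positivity)

def key (t : Σ _ : Fin q, ℕ) : ℚ ×ₗ ℕ := toLex (slope f t, Encodable.encode t)

theorem injOn_key : Set.InjOn (key f) (slots f) :=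
  fun _ _ _ _ h => Encodable.encode_injective (Prod.ext_iff.1 h).2

noncomputable def rank (t : Σ _ : Fin q, ℕ) : ℕ := #{s ∈ slots f | key f s < key f t}

theorem rank_add_one_le {t : Σ _ : Fin q, ℕ} (ht : t ∈ slots f) :
    ((rank f t + 1 : ℕ) : ℚ) ≤ slope f t * ∑ m, f m := by
  refine le_trans ?_ (card_filter_slope_le f (by unfold slope; positivity))
  rw [rank, ← card_insert_of_notMem (s := {s ∈ slots f | _}) (a := t) (by simp)]
  refine Nat.cast_le.2 (card_le_card fun s hs => ?_)
  rcases mem_insert.1 hs with rfl | hs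
  · simpa using ht
  · simp only [mem_filter, key, Prod.Lex.toLex_lt_toLex] at hs ⊢
    exact ⟨hs.1, hs.2.elim le_of_lt fun h => h.1.le⟩

theorem rank_add_one_mul_le {t : Σ _ : Fin q, ℕ} (ht : t ∈ slots f) :
    (rank f t + 1) * f t.1 ≤ (t.2 + 1) * ∑ m, f m := by
  have hpos : (0 : ℚ) < f t.1 := by
    have : t.2 < f t.1 := by simpa [slots] using ht
    exact_mod_cast t.2.zero_le.trans_lt this
  have h := rank_add_one_le f ht
  rw [slope, div_mul_eq_mul_div, le_div_iff₀ hpos] at h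
  exact_mod_cast h

variable {f} {e : ℕ}

theorem ascFactorial_mul_prod_ascFactorial_le (hf : ∑ m, f m = e) (n : ℕ) :
    (n * e + 1).ascFactorial e * ∏ m, ((n + 1) * f m + 1).ascFactorial (f m) ≤
      ((n + 1) * e + 1).ascFactorial e * ∏ m, (n * f m + 1).ascFactorial (f m) := by
  have hslots : ∀ c, ∏ m, (c * f m + 1).ascFactorial (f m) =
      ∏ t ∈ slots f, (c * f t.1 + 1 + t.2) := by
    simp [slots, prod_sigma, Nat.ascFactorial_eq_prod_range]
  have hrank : ∀ c, (c * e + 1).ascFactorial e = ∏ t ∈ slots f, (c * e + 1 + rank f t) := by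
    intro c
    have := prod_range_card_eq_prod_card_filter_lt (injOn_key f) (c * e + 1 + ·)
    rwa [card_slots, hf, ← Nat.ascFactorial_eq_prod_range] at this
  rw [hslots, hslots, hrank, hrank, ← prod_mul_distrib, ← prod_mul_distrib]
  refine prod_le_prod' fun t ht => ?_
  have h := rank_add_one_mul_le f ht
  rw [hf] at h
  -- the two sides differ by `(j + 1) e - (i + 1) f m`, with `i` the rank of the slot `(m, j)`
  nlinarith

variable (f) in
noncomputable def term (e n : ℕ) : ℚ := (n * e)! / ∏ m, ((n * f m)! : ℚ)

theorem term_pos (n : ℕ) : 0 < term f e n := by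
  unfold term; positivity

theorem term_succ_div (n : ℕ) :
    term f e (n + 1) / term f e n =
      ((n * e + 1).ascFactorial e : ℚ) / ∏ m, ((n * f m + 1).ascFactorial (f m) : ℚ) := by
  have hfact : ∀ k, (((n + 1) * k)! : ℚ) = (n * k)! * (n * k + 1).ascFactorial k := fun k => by
    rw [add_one_mul, ← Nat.factorial_mul_ascFactorial, Nat.cast_mul]
  simp only [term, hfact, prod_mul_distrib]
  field_simp

theorem monotone_term_succ_div (hf : ∑ m, f m = e) :
    Monotone fun n => term f e (n + 1) / term f e n := by
  refine monotone_nat_of_le_succ fun n => ?_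
  rw [term_succ_div, term_succ_div, div_le_div_iff₀ (by positivity) (by positivity)]
  exact_mod_cast ascFactorial_mul_prod_ascFactorial_le hf n

end Multinomial

theorem stmt5_general (q e : ℕ) (f : Fin q → ℕ) (hf : ∑ m, f m = e)
    (a : ℕ → ℚ)
    (ha : ∀ n, a n = (Nat.factorial (n * e) : ℚ) / ∏ m, (Nat.factorial (n * f m) : ℚ))
    (n : ℕ) (hn : 1 ≤ n) :
    a n ^ 2 ≤ a (n - 1) * a (n + 1) := by
  obtain ⟨p, rfl⟩ := Nat.exists_eq_add_of_le' hn
  obtain rfl : a = Multinomial.term f e := funext ha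
  exact sq_le_mul_of_monotone_div Multinomial.term_pos (Multinomial.monotone_term_succ_div hf) p

/-- For e ≥ 1 and f_1,…,f_q ≥ 0 with ∑ f_m = e, the sequence
a_n = (ne)!/∏_m (nf_m)! is log-convex: a_n² ≤ a_{n−1}·a_{n+1}. -/
theorem stmt5 (q e : ℕ) (he : 1 ≤ e) (f : Fin q → ℕ) (hf : ∑ m, f m = e)
    (a : ℕ → ℚ)
    (ha : ∀ n, a n = (Nat.factorial (n * e) : ℚ) / ∏ m, (Nat.factorial (n * f m) : ℚ))
    (n : ℕ) (hn : 1 ≤ n) :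
    a n ^ 2 ≤ a (n - 1) * a (n + 1) :=
  stmt5_general q e f hf a ha n hn
end

section
/- Let e ≥ 1 and f_1, …, f_q ≥ 0 be natural numbers with Σ_m f_m = e, and n ≥ 1. Then Π_{m} Π_{c=1}^{f_m} (n·f_m + c)/((n−1)·f_m + c) ≤ Π_{d=1}^{e} (n·e + d)/((n−1)·e + d). -/
/-- For e ≥ 1, f_1,…,f_q with ∑ f_m = e, and n ≥ 1:
∏_m ∏_{c=1}^{f_m} (n f_m + c)/((n−1) f_m + c) ≤ ∏_{d=1}^e (n e + d)/((n−1) e + d). -/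
theorem stmt6 (q e : ℕ) (he : 1 ≤ e) (f : Fin q → ℕ) (hf : ∑ m, f m = e)
    (n : ℕ) (hn : 1 ≤ n) :
    ∏ m, ∏ c ∈ Finset.range (f m),
        ((n * f m + c + 1 : ℕ) : ℝ) / (((n - 1) * f m + c + 1 : ℕ) : ℝ) ≤
      ∏ d ∈ Finset.range e,
        ((n * e + d + 1 : ℕ) : ℝ) / (((n - 1) * e + d + 1 : ℕ) : ℝ) := by
  obtain ⟨k, rfl⟩ : ∃ k, n = k + 1 := ⟨n - 1, (Nat.succ_pred_eq_of_pos hn).symm⟩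
  simp only [Nat.add_sub_cancel]
  set S : Finset ((_ : Fin q) × ℕ) := Finset.univ.sigma (fun m => Finset.range (f m)) with hS
  have hmemS : ∀ p : (_ : Fin q) × ℕ, p ∈ S ↔ p.2 < f p.1 := by
    intro p; cases p; simp [hS, Finset.mem_sigma]
  set φ : ((_ : Fin q) × ℕ) → ℚ ×ₗ ℕ :=
    fun p => toLex (((p.2 : ℚ) + 1) / (f p.1 : ℚ), (p.1 : ℕ)) with hφ
  have hφinj : ∀ p ∈ S, ∀ p' ∈ S, φ p = φ p' → p = p' := by
    rintro ⟨m, c⟩ hp ⟨m', c'⟩ hp' hpp'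
    have hfm : 0 < f m := lt_of_le_of_lt (Nat.zero_le _) ((hmemS _).mp hp)
    rw [hφ] at hpp'
    simp only [toLex_inj, Prod.mk.injEq] at hpp'
    obtain ⟨h1, h2⟩ := hpp'
    have hm : m = m' := Fin.val_injective h2
    subst hm
    have hc : c = c' := by
      have hne : (f m : ℚ) ≠ 0 := by positivity
      field_simp at h1
      have h1' : c + 1 = c' + 1 := by exact_mod_cast h1
      omega
    subst hc; rfl
  set R : ((_ : Fin q) × ℕ) → ℕ := fun p => (S.filter fun x => φ x ≤ φ p).card with hR
  have hR1 : ∀ p ∈ S, 1 ≤ R p := by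
    intro p hp
    exact Finset.card_pos.mpr ⟨p, Finset.mem_filter.mpr ⟨hp, le_refl _⟩⟩
  have hScard : S.card = e := by
    rw [hS, Finset.card_sigma]; simpa using hf
  have hRe : ∀ p ∈ S, R p ≤ e := by
    intro p _
    calc R p ≤ S.card := Finset.card_le_card (Finset.filter_subset _ _)
    _ = e := hScard
  have hRmono : ∀ p ∈ S, ∀ p' ∈ S, φ p < φ p' → R p < R p' := by
    intro p hp p' hp' hlt
    apply Finset.card_lt_card
    refine ⟨fun x hx => ?_, fun hsub => ?_⟩
    · rw [Finset.mem_filter] at hx ⊢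
      exact ⟨hx.1, le_trans hx.2 hlt.le⟩
    · have := hsub (Finset.mem_filter.mpr ⟨hp', le_refl _⟩)
      rw [Finset.mem_filter] at this
      exact absurd this.2 (not_le.mpr hlt)
  have hRinj : ∀ p ∈ S, ∀ p' ∈ S, R p = R p' → p = p' := by
    intro p hp p' hp' hRR
    by_contra hne
    have hφne : φ p ≠ φ p' := fun h => hne (hφinj p hp p' hp' h)
    rcases hφne.lt_or_gt with h | h
    · exact absurd hRR (Nat.ne_of_lt (hRmono p hp p' hp' h))
    · exact absurd hRR.symm (Nat.ne_of_lt (hRmono p' hp' p hp h))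
  have hkey : ∀ p ∈ S, R p * f p.1 ≤ (p.2 + 1) * e := by
    intro p hp
    have hfp : 0 < f p.1 := lt_of_le_of_lt (Nat.zero_le _) ((hmemS p).mp hp)
    have hsplit : (S.filter fun x => φ x ≤ φ p)
        = Finset.univ.sigma (fun m' => (Finset.range (f m')).filter
            (fun c' => φ ⟨m', c'⟩ ≤ φ p)) := by
      ext x; rcases x with ⟨m', c'⟩
      simp only [Finset.mem_filter, Finset.mem_sigma, Finset.mem_univ, true_and, hmemS,
        Finset.mem_range]
    have hcard : R p = ∑ m', ((Finset.range (f m')).filter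
        (fun c' => φ ⟨m', c'⟩ ≤ φ p)).card := by
      rw [hR]; simp only []; rw [hsplit, Finset.card_sigma]
    rw [hcard, Finset.sum_mul]
    calc ∑ m', ((Finset.range (f m')).filter (fun c' => φ ⟨m', c'⟩ ≤ φ p)).card * f p.1
        ≤ ∑ m', (p.2 + 1) * f m' := by
          apply Finset.sum_le_sum
          intro m' _
          set A := (p.2 + 1) * f m' / f p.1 with hA
          have hsub : (Finset.range (f m')).filter (fun c' => φ ⟨m', c'⟩ ≤ φ p)
              ⊆ Finset.range A := by
            intro c' hc'
            rw [Finset.mem_filter, Finset.mem_range] at hc'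
            obtain ⟨hlt, hle⟩ := hc'
            have hfm' : 0 < f m' := lt_of_le_of_lt (Nat.zero_le _) hlt
            have hfst : ((c' : ℚ) + 1) / (f m' : ℚ) ≤ ((p.2 : ℚ) + 1) / (f p.1 : ℚ) := by
              rw [hφ] at hle
              rcases (Prod.Lex.le_iff).mp hle with h | h
              · exact h.le
              · exact le_of_eq h.1
            have hq : ((c' : ℚ) + 1) * (f p.1 : ℚ) ≤ ((p.2 : ℚ) + 1) * (f m' : ℚ) := by
              rw [div_le_div_iff₀ (by exact_mod_cast hfm') (by exact_mod_cast hfp)] at hfst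
              exact hfst
            have hn' : (c' + 1) * f p.1 ≤ (p.2 + 1) * f m' := by exact_mod_cast hq
            rw [Finset.mem_range, hA]
            have : c' + 1 ≤ (p.2 + 1) * f m' / f p.1 :=
              (Nat.le_div_iff_mul_le hfp).mpr hn'
            omega
          calc ((Finset.range (f m')).filter (fun c' => φ ⟨m', c'⟩ ≤ φ p)).card * f p.1
              ≤ A * f p.1 := by
                apply Nat.mul_le_mul_right
                calc _ ≤ (Finset.range A).card := Finset.card_le_card hsub
                _ = A := Finset.card_range A
            _ ≤ (p.2 + 1) * f m' := Nat.div_mul_le_self _ _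
      _ = (p.2 + 1) * e := by rw [← Finset.mul_sum, hf]
  -- the two factor functions
  set g : ((_ : Fin q) × ℕ) → ℝ := fun p =>
    (((k + 1) * f p.1 + p.2 + 1 : ℕ) : ℝ) / ((k * f p.1 + p.2 + 1 : ℕ) : ℝ) with hg
  set h : ℕ → ℝ := fun d =>
    (((k + 1) * e + d + 1 : ℕ) : ℝ) / ((k * e + d + 1 : ℕ) : ℝ) with hh
  have hL : ∏ p ∈ S, g p = ∏ m, ∏ c ∈ Finset.range (f m),
      (((k + 1) * f m + c + 1 : ℕ) : ℝ) / ((k * f m + c + 1 : ℕ) : ℝ) :=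
    Finset.prod_sigma _ _ _
  rw [← hL]
  have hfac : ∀ p ∈ S, g p ≤ h (R p - 1) := by
    intro p hp
    obtain ⟨d, hd⟩ : ∃ d, R p = d + 1 := ⟨R p - 1, by have := hR1 p hp; omega⟩
    have hkp := hkey p hp
    rw [hd] at hkp
    have : R p - 1 = d := by omega
    rw [this, hg, hh]
    simp only []
    rw [div_le_div_iff₀ (by positivity) (by positivity)]
    have hcast : ((d + 1 : ℕ) : ℝ) * (f p.1 : ℝ) ≤ ((p.2 + 1 : ℕ) : ℝ) * (e : ℝ) := by
      exact_mod_cast hkp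
    push_cast at hcast ⊢
    nlinarith [hcast]
  calc ∏ p ∈ S, g p ≤ ∏ p ∈ S, h (R p - 1) := by
        apply Finset.prod_le_prod
        · intro p _; rw [hg]; positivity
        · exact hfac
    _ = ∏ d ∈ S.image (fun p => R p - 1), h d := by
        rw [Finset.prod_image]
        intro p hp p' hp' hpp'
        apply hRinj p hp p' hp'
        have h1 := hR1 p hp
        have h2 := hR1 p' hp'
        beta_reduce at hpp'
        omega
    _ ≤ ∏ d ∈ Finset.range e, h d := by
        have hsub : Finset.image (fun p => R p - 1) S ⊆ Finset.range e := by
          intro d hd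
          rw [Finset.mem_image] at hd
          obtain ⟨p, hp, rfl⟩ := hd
          rw [Finset.mem_range]
          have := hR1 p hp
          have := hRe p hp
          omega
        have hone : ∀ d, 1 ≤ h d := by
          intro d
          rw [hh]
          simp only []
          rw [le_div_iff₀ (by positivity)]
          push_cast
          nlinarith
        calc ∏ d ∈ Finset.image (fun p => R p - 1) S, h d
            = ∏ d ∈ Finset.range e,
                (if d ∈ Finset.image (fun p => R p - 1) S then h d else 1) := by
              rw [Finset.prod_ite_mem, Finset.inter_eq_right.mpr hsub]
          _ ≤ ∏ d ∈ Finset.range e, h d := by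
              apply Finset.prod_le_prod
              · intro d _
                split_ifs with hd
                · exact le_trans zero_le_one (hone d)
                · exact zero_le_one
              · intro d _
                split_ifs with hd
                · exact le_rfl
                · exact hone d
end

section
/- Let (a_n)_{n≥0} and (c_n)_{n≥1} be sequences of real numbers with a_0 = 1, a_1 > 0, a_n > 0 for all n, a_n² ≤ a_{n−1}a_{n+1} for all n ≥ 1 (log-convexity), and 0 ≤ c_n ≤ c_{n+1} for all n ≥ 1. Then the formal power series quotient b(w)/a(w) has nonnegative coefficients, where a(w) = Σ_{n≥0} a_n w^n and b(w) = Σ_{n≥1} a_n c_n w^n. -/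
/-- Krattenthaler–Rivoal criterion: if a_0 = 1, a_n > 0, (a_n) is log-convex,
and (c_n)_{n≥1} is nonnegative and increasing, then the formal power series
(∑_{n≥1} a_n c_n wⁿ)/(∑_{n≥0} a_n wⁿ) has nonnegative coefficients. -/
theorem stmt7 (a c : ℕ → ℝ) (ha0 : a 0 = 1) (ha1 : 0 < a 1)
    (hapos : ∀ n, 0 < a n)
    (hlogconv : ∀ n, 1 ≤ n → a n ^ 2 ≤ a (n - 1) * a (n + 1))
    (hc : ∀ n, 1 ≤ n → 0 ≤ c n ∧ c n ≤ c (n + 1)) :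
    ∀ n, 0 ≤ PowerSeries.coeff n
      (PowerSeries.mk (fun n => if n = 0 then 0 else a n * c n) *
        (PowerSeries.mk a)⁻¹) := by
  set b : ℕ → ℝ := fun n => if n = 0 then 0 else a n * c n with hbdef
  set d : ℕ → ℝ :=
    fun n => PowerSeries.coeff n (PowerSeries.mk b * (PowerSeries.mk a)⁻¹) with hddef
  suffices h : ∀ n, 0 ≤ d n by intro n; exact h n
  -- log-convexity rephrased
  have hlc : ∀ m, a (m+1) ^ 2 ≤ a m * a (m+2) := by
    intro m
    have := hlogconv (m+1) (by omega)
    simpa using this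
  -- ratio monotonicity
  have hratio : ∀ m, ∀ j, j ≤ m → a (j+1) * a m ≤ a (m+1) * a j := by
    intro m
    induction m with
    | zero => intro j hj; interval_cases j; exact le_rfl
    | succ m ih =>
      intro j hj
      rcases eq_or_lt_of_le hj with h | h
      · subst h; exact le_rfl
      · have hj' : j ≤ m := by omega
        have h1 := ih j hj'
        have h2 := hlc m
        have ham := hapos m
        have h3 : a (j+1) * a m * a (m+1) ≤ a (m+1) ^ 2 * a j := by
          nlinarith [hapos j, hapos (j+1), hapos (m+1)]
        have h4 : a (m+1) ^ 2 * a j ≤ a m * a (m+2) * a j := by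
          nlinarith [(hapos j).le]
        nlinarith [hapos j, hapos (m+1), hapos (m+2)]
  -- key convolution identity
  have hmul : PowerSeries.mk b =
      (PowerSeries.mk b * (PowerSeries.mk a)⁻¹) * PowerSeries.mk a := by
    rw [mul_assoc, PowerSeries.inv_mul_cancel _ (by simp [ha0]), mul_one]
  have key : ∀ n, ∑ k ∈ Finset.range (n+1), d k * a (n - k) = b n := by
    intro n
    have h := congrArg (PowerSeries.coeff n) hmul
    rw [PowerSeries.coeff_mk, PowerSeries.coeff_mul,
      Finset.Nat.sum_antidiagonal_eq_sum_range_succ_mk] at h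
    simp only [PowerSeries.coeff_mk] at h
    exact h.symm
  have hd0 : d 0 = 0 := by
    have h := key 0
    simpa [ha0, hbdef] using h
  intro n
  induction n using Nat.strong_induction_on with
  | _ n ih =>
    match n with
    | 0 => rw [hd0]
    | (m+1) =>
      have hkey := key (m+1)
      rw [Finset.sum_range_succ] at hkey
      have hsub : m + 1 - (m + 1) = 0 := by omega
      rw [hsub, ha0, mul_one] at hkey
      have hb : b (m+1) = a (m+1) * c (m+1) := by simp [hbdef]
      rw [hb] at hkey
      -- suffices: partial sum ≤ a(m+1) c(m+1)
      have hbound : ∑ k ∈ Finset.range (m+1), d k * a (m+1-k) ≤ a (m+1) * c (m+1) := by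
        match m with
        | 0 =>
          simp [hd0]
          have := hc 1 le_rfl
          nlinarith [hapos 1]
        | (p+1) =>
          set m' := p + 1 with hm'
          have hkeym := key m'
          have hbm : b m' = a m' * c m' := by simp [hbdef, hm']
          rw [hbm] at hkeym
          have hterm : ∀ k ∈ Finset.range (m'+1),
              d k * a (m'+1-k) * a m' ≤ d k * a (m'-k) * a (m'+1) := by
            intro k hk
            have hk' : k ≤ m' := by
              simp only [Finset.mem_range] at hk; omega
            have hdk : 0 ≤ d k := ih k (by omega)
            have heq : m' + 1 - k = (m' - k) + 1 := by omega
            have hr := hratio m' (m' - k) (by omega)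
            rw [heq]
            nlinarith [hapos (m'-k), hapos ((m'-k)+1)]
          have hsum : (∑ k ∈ Finset.range (m'+1), d k * a (m'+1-k)) * a m'
              ≤ (∑ k ∈ Finset.range (m'+1), d k * a (m'-k)) * a (m'+1) := by
            rw [Finset.sum_mul, Finset.sum_mul]
            exact Finset.sum_le_sum hterm
          rw [hkeym] at hsum
          have hcm := hc m' (by omega)
          have ham := hapos m'
          have ham1 := hapos (m'+1)
          -- a m' * c m' * a (m'+1) ≤ a (m'+1) * c (m'+1) * a m'
          have h2 : a m' * c m' * a (m'+1) ≤ a (m'+1) * c (m'+1) * a m' := by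
            have := hcm.2
            nlinarith [mul_pos ham ham1]
          have h3 : (∑ k ∈ Finset.range (m'+1), d k * a (m'+1-k)) * a m'
              ≤ (a (m'+1) * c (m'+1)) * a m' := by linarith
          exact le_of_mul_le_mul_right h3 ham
      linarith
end

section
/- Let v_1, …, v_N ∈ ℤ^d be vectors whose convex hull Δ (together with the origin) has the origin as its unique interior lattice point, and suppose v_j ≠ 0 for a fixed index j. Let K ⊂ ℤ^N be the kernel of the map e_i ↦ v_i, let K_0 = K ∩ ℕ^N, and let K_j = {k ∈ K : k_j < 0, k_i ≥ 0 for i ≠ j}. Then the convex cone generated by K_0 ∪ K_j in ℝ^N is strictly convex: there exists w ∈ ℝ^N such that ⟨w, k⟩ > 0 for every nonzero k ∈ K_0 ∪ K_j. -/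
/-!
For `k ∈ K_j` write `m = -k_j > 0`; then `∑_{i ≠ j} k_i v_i = m v_j`. If the total `∑_i k_i` were
negative, the weights on the left would sum to less than `m`, so `v_j` would be a convex combination
of the origin (with positive weight) and a point of `Δ`, hence an interior lattice point of `Δ`,
i.e. `v_j = 0`. So `∑_i k_i ≥ 0` on `K_j`, and `∑_i k_i > 0` on `K_0 \ {0}`; halving the weight on
the `j`-th coordinate makes both strict: `w = (1, …, 1, 1/2, 1, …, 1)` works.
-/

open Finset

section Interior

variable {E ι : Type*} [AddCommGroup E] [Module ℝ E]

theorem Convex.exists_mem_sum_smul_eq_sum_smul {Δ : Set E} (hΔ : Convex ℝ Δ) (hne : Δ.Nonempty)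
    {s : Finset ι} {c : ι → ℝ} {f : ι → E} (hc : ∀ i ∈ s, 0 ≤ c i) (hf : ∀ i ∈ s, f i ∈ Δ) :
    ∃ q ∈ Δ, ∑ i ∈ s, c i • f i = (∑ i ∈ s, c i) • q := by
  rcases (sum_nonneg hc).eq_or_lt with hS | hS
  · obtain ⟨q, hq⟩ := hne
    have hc0 := (sum_eq_zero_iff_of_nonneg hc).mp hS.symm
    exact ⟨q, hq, by rw [← hS, zero_smul]; exact sum_eq_zero fun i hi => by simp [hc0 i hi]⟩
  · exact ⟨s.centerMass c f, hΔ.centerMass_mem hc hS hf, (smul_inv_smul₀ hS.ne' _).symm⟩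

variable [TopologicalSpace E] [IsTopologicalAddGroup E] [ContinuousConstSMul ℝ E]

/-- The weight left over for the interior point `0` is `m - ∑ c_i > 0`. -/
theorem Convex.mem_interior_of_sum_smul_eq {Δ : Set E} (hΔ : Convex ℝ Δ) (h0 : 0 ∈ interior Δ)
    {s : Finset ι} {c : ι → ℝ} {f : ι → E} {m : ℝ} {x : E} (hc : ∀ i ∈ s, 0 ≤ c i)
    (hf : ∀ i ∈ s, f i ∈ Δ) (hlt : ∑ i ∈ s, c i < m) (hx : ∑ i ∈ s, c i • f i = m • x) :
    x ∈ interior Δ := by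
  obtain ⟨q, hqΔ, hq⟩ := hΔ.exists_mem_sum_smul_eq_sum_smul ⟨0, interior_subset h0⟩ hc hf
  set S := ∑ i ∈ s, c i
  have hm : 0 < m := (sum_nonneg hc).trans_lt hlt
  have hxq : x = (1 - S / m) • (0 : E) + (S / m) • q := by
    rw [smul_zero, zero_add, div_eq_inv_mul, mul_smul, ← hq, hx, inv_smul_smul₀ hm.ne']
  rw [hxq]
  exact hΔ.combo_interior_self_mem_interior h0 hqΔ
    (sub_pos.mpr ((div_lt_one hm).mpr hlt)) (div_nonneg (sum_nonneg hc) hm.le) (by ring)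

theorem mem_interior_convexHull_of_sum_smul_eq_zero [Fintype ι] [DecidableEq ι] (f : ι → E)
    (h0 : 0 ∈ interior (convexHull ℝ (insert 0 (Set.range f)))) {c : ι → ℝ}
    (hc : ∑ i, c i • f i = 0) {j : ι} (hpos : ∀ i, i ≠ j → 0 ≤ c i) (hneg : ∑ i, c i < 0) :
    f j ∈ interior (convexHull ℝ (insert 0 (Set.range f))) := by
  rw [← add_sum_erase _ _ (mem_univ j)] at hc hneg
  refine (convex_convexHull ℝ _).mem_interior_of_sum_smul_eq h0 (s := univ.erase j) (m := -c j)
    (fun i hi => hpos i (ne_of_mem_erase hi))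
    (fun i _ => subset_convexHull ℝ _ (Set.mem_insert_of_mem _ (Set.mem_range_self i)))
    (by linarith) ?_
  rw [neg_smul, eq_neg_iff_add_eq_zero, add_comm, hc]

end Interior

theorem intCast_sum_smul_eq_zero {ι : Type*} [Fintype ι] {d : ℕ} {k : ι → ℤ}
    {v : ι → Fin d → ℤ} (h : ∑ i, k i • v i = 0) :
    ∑ i, (k i : ℝ) • (fun x => (v i x : ℝ)) = 0 := by
  funext x
  have hx := congrFun h x
  simp only [Finset.sum_apply, Pi.smul_apply, smul_eq_mul, Pi.zero_apply] at hx ⊢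
  exact_mod_cast hx

theorem sum_ite_mul_eq {ι : Type*} [Fintype ι] [DecidableEq ι] (c : ι → ℝ) (j : ι) (a : ℝ) :
    ∑ i, (if i = j then a else 1) * c i = ∑ i, c i + (a - 1) * c j := by
  rw [← add_sum_erase _ _ (mem_univ j), ← add_sum_erase _ c (mem_univ j), if_pos rfl,
    sum_congr rfl fun i hi => by rw [if_neg (ne_of_mem_erase hi), one_mul]]
  ring

/-- If the origin is the unique interior lattice point of the convex hull Δ of
{0, v_1, …, v_N}, and v_j ≠ 0, then the cone generated by K_0 and K_j is strictly
convex: there is w with ⟨w,k⟩ > 0 for all nonzero k ∈ K_0 ∪ K_j. -/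
theorem stmt8 (N d : ℕ) (v : Fin N → Fin d → ℤ) (j : Fin N) (hvj : v j ≠ 0)
    (Δ : Set (Fin d → ℝ))
    (hΔ : Δ = convexHull ℝ (insert 0 (Set.range (fun i => fun x => ((v i x : ℤ) : ℝ)))))
    (h0 : (0 : Fin d → ℝ) ∈ interior Δ)
    (huniq : ∀ p : Fin d → ℤ, (fun x => ((p x : ℤ) : ℝ)) ∈ interior Δ → p = 0) :
    ∃ w : Fin N → ℝ, ∀ k : Fin N → ℤ, k ≠ 0 →
      ((∑ i, k i • v i = 0 ∧ ∀ i, 0 ≤ k i) ∨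
        (∑ i, k i • v i = 0 ∧ k j < 0 ∧ ∀ i, i ≠ j → 0 ≤ k i)) →
      0 < ∑ i, w i * (k i : ℝ) := by
  subst hΔ
  have hKj : ∀ k : Fin N → ℤ, ∑ i, k i • v i = 0 → (∀ i, i ≠ j → 0 ≤ k i) →
      0 ≤ ∑ i, (k i : ℝ) := by
    intro k hk hpos
    by_contra! hneg
    exact hvj <| huniq _ <| mem_interior_convexHull_of_sum_smul_eq_zero _ h0
      (intCast_sum_smul_eq_zero hk) (fun i hi => Int.cast_nonneg_iff.mpr (hpos i hi)) hneg
  refine ⟨fun i => if i = j then 1 / 2 else 1, fun k hk hK => ?_⟩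
  rw [sum_ite_mul_eq]
  rcases hK with ⟨-, hpos⟩ | ⟨hsum, hkj, hpos⟩
  · have hpos' : ∀ i ∈ univ, (0 : ℝ) ≤ k i := fun i _ => Int.cast_nonneg_iff.mpr (hpos i)
    obtain ⟨i, hi⟩ := Function.ne_iff.mp hk
    have hsum : 0 < ∑ i, (k i : ℝ) :=
      sum_pos' hpos' ⟨i, mem_univ i, Int.cast_pos.mpr ((hpos i).lt_of_ne' hi)⟩
    have hle : (k j : ℝ) ≤ ∑ i, (k i : ℝ) := single_le_sum hpos' (mem_univ j)
    linarith
  · have hkj' : (k j : ℝ) < 0 := Int.cast_lt_zero.mpr hkj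
    linarith [hKj k hsum hpos]
end

section
/- Let F : ℝ^r → ℝ^I be a linear map whose matrix has nonnegative integer entries and full rank r, restricting to an isomorphism of ℤ^r onto K = ker(V : ℤ^I → ℤ^d) and of ℕ^r onto K ∩ ℕ^I. Let 𝒴 ⊂ [0,1)^I be an open subset (in [0,1)^I) of the form {y : Σ_{j} y_{ij} < 1 for all i}. If x ∈ [0,1)^r satisfies {F}(x) = F(a) for some a ∈ ℝ^r with F(a) ∈ 𝒴, then a ∈ [0,1)^r and x = a; in particular F(x) ∈ 𝒴. -/
/-! Put `d = x - a`. Since `F` is additive, `F d = F x - {F x} = ⌊F x⌋`, which is integral and, as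
`F x ≥ 0`, nonnegative; so `d ∈ ℕ^r` because `F` identifies `ℤ^r` with `K` and `ℕ^r` with `K ∩ ℕ^I`.
Moreover `F a = {F x} ≥ 0` forces `a ≥ 0`, hence `d < 1` coordinatewise, so `d = 0`. -/

lemma Int.eq_zero_of_cast_mem_Ico {m : ℤ} (h₀ : (0 : ℝ) ≤ m) (h₁ : (m : ℝ) < 1) : m = 0 := by
  have : 0 ≤ m := by exact_mod_cast h₀
  have : m < 1 := by exact_mod_cast h₁
  omega

theorem eq_of_fract_map_eq {ι κ : Type*} (F : (ι → ℝ) →+ (κ → ℝ))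
    (hpos : ∀ a : ι → ℝ, (∀ s, 0 ≤ F a s) → ∀ l, 0 ≤ a l)
    (hint : ∀ x : ι → ℝ, (∀ s, ∃ m : ℤ, F x s = (m : ℝ)) → ∀ l, ∃ m : ℤ, x l = (m : ℝ))
    {x a : ι → ℝ} (hx : ∀ l, x l < 1) (hFx : ∀ s, 0 ≤ F x s)
    (hfrac : ∀ s, Int.fract (F x s) = F a s) : x = a := by
  have ha : ∀ l, 0 ≤ a l := hpos a fun s => hfrac s ▸ Int.fract_nonneg _
  have hFd : ∀ s, F (x - a) s = ⌊F x s⌋ := fun s => by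
    rw [map_sub, Pi.sub_apply, ← hfrac, Int.self_sub_fract]
  have hd : ∀ l, 0 ≤ (x - a) l :=
    hpos _ fun s => hFd s ▸ mod_cast Int.floor_nonneg.mpr (hFx s)
  funext l
  obtain ⟨m, hm⟩ := hint _ (fun s => ⟨_, hFd s⟩) l
  have hd1 : (x - a) l < 1 := by linarith [hx l, ha l, Pi.sub_apply x a l]
  have hm0 : m = 0 := Int.eq_zero_of_cast_mem_Ico (hm ▸ hd l) (hm ▸ hd1)
  simpa [hm0, sub_eq_zero] using hm

theorem stmt17_general (p r : ℕ) (q : Fin p → ℕ) (M : (Σ i : Fin p, Fin (q i)) → Fin r → ℕ)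
    (F : (Fin r → ℝ) → ((Σ i : Fin p, Fin (q i)) → ℝ))
    (hF : F = fun x s => ∑ l, (M s l : ℝ) * x l)
    (hpos : ∀ a : Fin r → ℝ, (∀ s, 0 ≤ F a s) → ∀ l, 0 ≤ a l)
    (hint : ∀ x : Fin r → ℝ, (∀ s, ∃ m : ℤ, F x s = (m : ℝ)) → ∀ l, ∃ m : ℤ, x l = (m : ℝ))
    (x a : Fin r → ℝ) (hx : ∀ l, x l ∈ Set.Ico (0 : ℝ) 1)
    (hfrac : ∀ s, Int.fract (F x s) = F a s)
    (hY : (∀ s, F a s ∈ Set.Ico (0 : ℝ) 1) ∧ ∀ i : Fin p, ∑ j, F a ⟨i, j⟩ < 1) :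
    (∀ l, a l ∈ Set.Ico (0 : ℝ) 1) ∧ x = a ∧
      ((∀ s, F x s ∈ Set.Ico (0 : ℝ) 1) ∧ ∀ i : Fin p, ∑ j, F x ⟨i, j⟩ < 1) := by
  have hadd : ∀ y z, F (y + z) = F y + F z := fun y z => by
    subst hF; funext s; simp [mul_add, Finset.sum_add_distrib]
  have hFx : ∀ s, 0 ≤ F x s := fun s => by
    subst hF; exact Finset.sum_nonneg fun l _ => mul_nonneg (Nat.cast_nonneg _) (hx l).1
  obtain rfl : x = a :=
    eq_of_fract_map_eq (AddMonoidHom.mk' F hadd) hpos hint (fun l => (hx l).2) hFx hfrac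
  exact ⟨hx, rfl, hY⟩

/-- Key step in the equivalence of the Fano condition with Delaygue's criterion.
F : ℝʳ → ℝᴵ is given by a nonnegative integer matrix of full rank r, identifying
ℤʳ with K and ℕʳ with K ∩ ℕᴵ (expressed by `hint` and `hpos`). If x ∈ [0,1)ʳ and
the fractional part of F(x) equals F(a) with F(a) ∈ 𝒴, then a ∈ [0,1)ʳ and x = a;
in particular F(x) ∈ 𝒴. -/
theorem stmt17 (p r : ℕ) (q : Fin p → ℕ) (M : (Σ i : Fin p, Fin (q i)) → Fin r → ℕ)
    (F : (Fin r → ℝ) → ((Σ i : Fin p, Fin (q i)) → ℝ))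
    (hF : F = fun x s => ∑ l, (M s l : ℝ) * x l)
    (hrank : Function.Injective F)
    (hpos : ∀ a : Fin r → ℝ, (∀ s, 0 ≤ F a s) → ∀ l, 0 ≤ a l)
    (hint : ∀ x : Fin r → ℝ, (∀ s, ∃ m : ℤ, F x s = (m : ℝ)) → ∀ l, ∃ m : ℤ, x l = (m : ℝ))
    (x a : Fin r → ℝ) (hx : ∀ l, x l ∈ Set.Ico (0 : ℝ) 1)
    (hfrac : ∀ s, Int.fract (F x s) = F a s)
    (hY : (∀ s, F a s ∈ Set.Ico (0 : ℝ) 1) ∧ ∀ i : Fin p, ∑ j, F a ⟨i, j⟩ < 1) :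
    (∀ l, a l ∈ Set.Ico (0 : ℝ) 1) ∧ x = a ∧
      ((∀ s, F x s ∈ Set.Ico (0 : ℝ) 1) ∧ ∀ i : Fin p, ∑ j, F x ⟨i, j⟩ < 1) :=
  stmt17_general p r q M F hF hpos hint x a hx hfrac hY
end

section
/- Let φ_0(z) = Σ_{k≥0} (5k)!/(k!)^5 · z^k and φ_1(z) = Σ_{k≥1} (5k)!/(k!)^5 · (Σ_{j=k+1}^{5k} 1/j) · z^k as formal power series over ℚ. Then the formal power series φ_1/φ_0 has nonnegative coefficients. -/
/-! Auxiliary definitions: `qa k = (5k)!/(k!)^5`, `qc k = ∑_{j=k+1}^{5k} 1/j`,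
and `qr k = qa (k+1)/qa k`. We prove that `qa` is log-convex and `qc` is
nonnegative and increasing, and then run the Krattenthaler–Rivoal argument. -/

private def qa (k : ℕ) : ℚ := (Nat.factorial (5*k) : ℚ) / (Nat.factorial k : ℚ) ^ 5
private def qc (k : ℕ) : ℚ := ∑ j ∈ Finset.Ico (k+1) (5*k+1), (1:ℚ)/j
private def qr (k : ℕ) : ℚ :=
  ((5*k+1 : ℕ) * (5*k+2 : ℕ) * (5*k+3 : ℕ) * (5*k+4 : ℕ) * (5*k+5 : ℕ) : ℚ) / ((k:ℚ)+1)^5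

private lemma qa_pos (k : ℕ) : 0 < qa k := by
  unfold qa
  apply div_pos
  · exact_mod_cast Nat.factorial_pos (5*k)
  · have := Nat.factorial_pos k
    positivity

private lemma qa_zero : qa 0 = 1 := by norm_num [qa, Nat.factorial]

private lemma qa_succ (k : ℕ) : qa (k+1) = qa k * qr k := by
  have hf : ∀ n : ℕ, Nat.factorial (n+1) = (n+1) * Nat.factorial n := fun n => Nat.factorial_succ n
  have h5 : 5*(k+1) = 5*k+5 := by ring
  have e : Nat.factorial (5*k+5)
      = (5*k+5) * ((5*k+4) * ((5*k+3) * ((5*k+2) * ((5*k+1) * Nat.factorial (5*k))))) := by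
    rw [show 5*k+5 = (5*k+4)+1 by ring, hf, show 5*k+4 = (5*k+3)+1 by ring, hf,
        show 5*k+3 = (5*k+2)+1 by ring, hf, show 5*k+2 = (5*k+1)+1 by ring, hf,
        show 5*k+1 = (5*k)+1 by ring, hf]
  have hk : (Nat.factorial k : ℚ) ≠ 0 := by exact_mod_cast (Nat.factorial_pos k).ne'
  have hk1 : ((k:ℚ)+1) ≠ 0 := by positivity
  unfold qa qr
  rw [h5, e, hf k]
  push_cast
  field_simp

private lemma qr_step (k : ℕ) : qr k ≤ qr (k+1) := by
  have hx : (0:ℚ) ≤ (k:ℚ) := Nat.cast_nonneg k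
  unfold qr
  rw [div_le_div_iff₀ (by positivity) (by positivity)]
  push_cast
  nlinarith [pow_nonneg hx 2, pow_nonneg hx 3, pow_nonneg hx 4, pow_nonneg hx 5,
    pow_nonneg hx 6, pow_nonneg hx 7, pow_nonneg hx 8, pow_nonneg hx 9, pow_nonneg hx 10]

private lemma qr_mono : Monotone qr := monotone_nat_of_le_succ qr_step

private lemma qa_key {m n : ℕ} (h : m ≤ n) : qa (m+1) * qa n ≤ qa m * qa (n+1) := by
  rw [qa_succ, qa_succ]
  have h1 := qr_mono h
  have h2 := (qa_pos m).le
  have h3 := (qa_pos n).le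
  nlinarith [mul_le_mul_of_nonneg_left h1 (mul_nonneg h2 h3)]

private lemma qc_zero : qc 0 = 0 := by simp [qc]

private lemma qc_nonneg (k : ℕ) : 0 ≤ qc k := by
  unfold qc
  apply Finset.sum_nonneg
  intro j hj
  positivity

private lemma qc_step (k : ℕ) : qc k ≤ qc (k+1) := by
  unfold qc
  have h1 : k+1 ≤ 5*k+1 := by omega
  have h2 : 5*k+1 ≤ 5*(k+1)+1 := by omega
  have h3 : k+1 < 5*(k+1)+1 := by omega
  have hA := Finset.sum_eq_sum_Ico_succ_bot h3 (fun j => (1:ℚ)/j)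
  have hB := Finset.sum_Ico_consecutive (fun j => (1:ℚ)/j) h1 h2
  have key : (1:ℚ)/((k:ℚ)+1) ≤ ∑ j ∈ Finset.Ico (5*k+1) (5*(k+1)+1), (1:ℚ)/j := by
    have hub : ∑ j ∈ Finset.Ico (5*k+1) (5*(k+1)+1), (1:ℚ)/(5*(k:ℚ)+5)
        ≤ ∑ j ∈ Finset.Ico (5*k+1) (5*(k+1)+1), (1:ℚ)/j := by
      apply Finset.sum_le_sum
      intro j hj
      simp only [Finset.mem_Ico] at hj
      have hj0 : (0:ℚ) < j := by exact_mod_cast Nat.lt_of_lt_of_le (by omega) hj.1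
      apply one_div_le_one_div_of_le hj0
      have hjn : j ≤ 5*k+5 := by omega
      push_cast
      exact_mod_cast (show (j:ℚ) ≤ 5*(k:ℚ)+5 by exact_mod_cast hjn)
    refine le_trans ?_ hub
    rw [Finset.sum_const, Nat.card_Ico, show 5*(k+1)+1 - (5*k+1) = 5 by omega, nsmul_eq_mul]
    push_cast
    have hpos : (0:ℚ) < (k:ℚ)+1 := by positivity
    have h55 : (0:ℚ) < 5*(k:ℚ)+5 := by positivity
    rw [show (5:ℚ)*(1/(5*(k:ℚ)+5)) = 1/((k:ℚ)+1) by field_simp]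
  push_cast at hA key ⊢
  linarith [hA, hB, key]

/-- The quintic mirror map power series φ₁/φ₀ has nonnegative coefficients, where
φ₀ = ∑ (5k)!/(k!)⁵ zᵏ and φ₁ = ∑ (5k)!/(k!)⁵ (∑_{j=k+1}^{5k} 1/j) zᵏ. -/
theorem stmt19
    (φ0 φ1 : PowerSeries ℚ)
    (hφ0 : φ0 = PowerSeries.mk fun k =>
      (Nat.factorial (5 * k) : ℚ) / (Nat.factorial k : ℚ) ^ 5)
    (hφ1 : φ1 = PowerSeries.mk fun k =>
      (Nat.factorial (5 * k) : ℚ) / (Nat.factorial k : ℚ) ^ 5 *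
        ∑ j ∈ Finset.Ico (k + 1) (5 * k + 1), (1 : ℚ) / j) :
    ∀ n, 0 ≤ PowerSeries.coeff n (φ1 * φ0⁻¹) := by
  set ψ := φ1 * φ0⁻¹ with hψ
  set b : ℕ → ℚ := fun n => PowerSeries.coeff n ψ with hb
  have hconst : PowerSeries.constantCoeff φ0 = 1 := by
    rw [hφ0]; simp [Nat.factorial]
  have hmul : φ0 * ψ = φ1 := by
    rw [hψ, mul_comm φ1, ← mul_assoc, PowerSeries.mul_inv_cancel _ (by rw [hconst]; norm_num),
      one_mul]
  -- the recurrence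
  have R : ∀ n, ∑ k ∈ Finset.range (n+1), qa k * b (n-k) = qa n * qc n := by
    intro n
    have h1 : PowerSeries.coeff n (φ0 * ψ) = qa n * qc n := by
      rw [hmul, hφ1]; simp [qa, qc]
    rw [PowerSeries.coeff_mul, Finset.Nat.sum_antidiagonal_eq_sum_range_succ_mk] at h1
    rw [← h1]
    apply Finset.sum_congr rfl
    intro k hk
    rw [hφ0]
    simp [qa, hb]
  have hb0 : b 0 = 0 := by
    have := R 0
    simp [qa_zero, qc_zero] at this
    simpa using this
  -- main induction
  intro n
  induction n using Nat.strong_induction_on with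
  | _ n ih =>
    show 0 ≤ b n
    match n with
    | 0 => rw [hb0]
    | (m+1) =>
      have Rm := R m
      have Rm1 := R (m+1)
      -- split off the k = 0 term of Rm1
      rw [Finset.sum_range_succ'] at Rm1
      simp only [qa_zero, one_mul, Nat.sub_zero] at Rm1
      have hsplit : ∀ k ∈ Finset.range (m+1), m + 1 - (k+1) = m - k := by
        intro k hk; omega
      have Rm1' : (∑ k ∈ Finset.range (m+1), qa (k+1) * b (m-k)) + b (m+1)
          = qa (m+1) * qc (m+1) := by
        rw [← Rm1]
        congr 1
        apply Finset.sum_congr rfl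
        intro k hk
        rw [hsplit k hk]
      -- key bound coming from log-convexity of `qa`
      have key : qa m * (∑ k ∈ Finset.range (m+1), qa (k+1) * b (m-k))
          ≤ qa (m+1) * (qa m * qc m) := by
        rw [← Rm, Finset.mul_sum, Finset.mul_sum]
        apply Finset.sum_le_sum
        intro k hk
        have hkm : k ≤ m := by simp at hk; omega
        have hbk : 0 ≤ b (m-k) := ih (m-k) (by omega)
        calc qa m * (qa (k+1) * b (m-k)) = (qa (k+1) * qa m) * b (m-k) := by ring
          _ ≤ (qa k * qa (m+1)) * b (m-k) := mul_le_mul_of_nonneg_right (qa_key hkm) hbk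
          _ = qa (m+1) * (qa k * b (m-k)) := by ring
      have key2 : (∑ k ∈ Finset.range (m+1), qa (k+1) * b (m-k)) ≤ qa (m+1) * qc m := by
        have h := key
        rw [show qa (m+1) * (qa m * qc m) = qa m * (qa (m+1) * qc m) by ring] at h
        exact le_of_mul_le_mul_left h (qa_pos m)
      have := qc_step m
      nlinarith [qa_pos (m+1)]
end
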